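/- arXiv:2605.11575 — 2 statements merged into one kernel-verified Lean document; each statement's English description precedes it below -/
import Mathlib

section
/- For the N = 2 truncated contact potential H = H^(0) + B^i(t,y)φ_i + (1/2)φ^T A(t,y) φ with A symmetric, if (i) ∂_t H^(0) + B^i ∂_{y^i} H^(0) = 0, (ii) A ∇H^(0) = 0, and (iii) ∂_t A + B^l ∂_{y^l} A = M A + A M^T (where M = ∂B/∂y), then H satisfies the master equation D[∂H/∂t] + {D[H], H} = 0 identically. -/
namespace Stmt7

open Matrix

variable {m : ℕ}

noncomputable def pd (f : (Fin m → ℝ) → ℝ) (i : Fin m) (y : Fin m → ℝ) : ℝ :=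
  fderiv ℝ f y (Pi.single i 1)

noncomputable def pdPhi (f : ℝ → (Fin m → ℝ) → (Fin m → ℝ) → ℝ) (i : Fin m)
    (t : ℝ) (y φ : Fin m → ℝ) : ℝ :=
  fderiv ℝ (fun p => f t y p) φ (Pi.single i 1)

noncomputable def pdY (f : ℝ → (Fin m → ℝ) → (Fin m → ℝ) → ℝ) (i : Fin m)
    (t : ℝ) (y φ : Fin m → ℝ) : ℝ :=
  fderiv ℝ (fun p => f t p φ) y (Pi.single i 1)

noncomputable def pdT (f : ℝ → (Fin m → ℝ) → (Fin m → ℝ) → ℝ)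
    (t : ℝ) (y φ : Fin m → ℝ) : ℝ :=
  deriv (fun s => f s y φ) t

/-- Discriminant operator `D[f] = Σ_i φ_i ∂f/∂φ_i − f`. -/
noncomputable def Dop (f : ℝ → (Fin m → ℝ) → (Fin m → ℝ) → ℝ)
    (t : ℝ) (y φ : Fin m → ℝ) : ℝ :=
  ∑ i, φ i * pdPhi f i t y φ - f t y φ

noncomputable def pb (f g : ℝ → (Fin m → ℝ) → (Fin m → ℝ) → ℝ)
    (t : ℝ) (y φ : Fin m → ℝ) : ℝ :=
  ∑ i, (pdY f i t y φ * pdPhi g i t y φ - pdPhi f i t y φ * pdY g i t y φ)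

lemma proj_hasFDeriv (φ : Fin m → ℝ) (k : Fin m) :
    HasFDerivAt (fun p : Fin m → ℝ => p k) (ContinuousLinearMap.proj k : (Fin m → ℝ) →L[ℝ] ℝ) φ :=
  (ContinuousLinearMap.proj k : (Fin m → ℝ) →L[ℝ] ℝ).hasFDerivAt

lemma fderiv_quad (c : ℝ) (b : Fin m → ℝ) (a : Fin m → Fin m → ℝ) (φ : Fin m → ℝ) (i : Fin m) :
    fderiv ℝ (fun p : Fin m → ℝ => c + (∑ k, b k * p k) + (1/2) * ∑ k, ∑ l, a k l * p k * p l) φ (Pi.single i 1)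
    = b i + (1/2) * ((∑ l, a i l * φ l) + (∑ k, a k i * φ k)) := by
  have h1 : HasFDerivAt (fun p : Fin m → ℝ => ∑ k, b k * p k)
      (∑ k, b k • (ContinuousLinearMap.proj k : (Fin m → ℝ) →L[ℝ] ℝ)) φ :=
    HasFDerivAt.fun_sum fun k _ => ((proj_hasFDeriv φ k).const_mul (b k))
  have h2 : HasFDerivAt (fun p : Fin m → ℝ => ∑ k, ∑ l, a k l * p k * p l)
      (∑ k, ∑ l, ((a k l * φ k) • (ContinuousLinearMap.proj l : (Fin m → ℝ) →L[ℝ] ℝ)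
        + φ l • (a k l • (ContinuousLinearMap.proj k : (Fin m → ℝ) →L[ℝ] ℝ)))) φ :=
    HasFDerivAt.fun_sum fun k _ => HasFDerivAt.fun_sum fun l _ =>
      (((proj_hasFDeriv φ k).const_mul (a k l)).mul (proj_hasFDeriv φ l))
  have h := ((hasFDerivAt_const c φ).fun_add h1).fun_add (h2.const_mul (1/2))
  rw [h.fderiv]
  simp [ContinuousLinearMap.sum_apply, ContinuousLinearMap.proj_apply, Pi.single_apply,
    mul_ite, mul_one, mul_zero, Finset.sum_ite_eq', smul_eq_mul]
  simp only [Finset.sum_add_distrib]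
  rw [add_comm]
  congr 1
  · rw [Finset.sum_comm]
    simp only [Finset.sum_ite_eq', Finset.mem_univ, if_true]
    exact Finset.sum_congr rfl fun x _ => by ring
  · simp only [Finset.sum_ite_eq', Finset.mem_univ, if_true]

lemma pdPhi_quad (f : ℝ → (Fin m → ℝ) → (Fin m → ℝ) → ℝ)
    (c : ℝ → (Fin m → ℝ) → ℝ) (bb : ℝ → (Fin m → ℝ) → Fin m → ℝ)
    (aa : ℝ → (Fin m → ℝ) → Fin m → Fin m → ℝ)
    (hsym : ∀ t y k l, aa t y k l = aa t y l k)
    (hf : ∀ t y φ, f t y φ = c t y + (∑ k, bb t y k * φ k) + (1/2) * ∑ k, ∑ l, aa t y k l * φ k * φ l)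
    (i : Fin m) (t : ℝ) (y φ : Fin m → ℝ) :
    pdPhi f i t y φ = bb t y i + ∑ j, aa t y i j * φ j := by
  unfold pdPhi
  rw [show (fun p => f t y p) = (fun p => c t y + (∑ k, bb t y k * p k)
    + (1/2) * ∑ k, ∑ l, aa t y k l * p k * p l) from funext (hf t y)]
  rw [fderiv_quad]
  have h2 : ∑ k, aa t y k i * φ k = ∑ j, aa t y i j * φ j :=
    Finset.sum_congr rfl fun k _ => by rw [hsym t y k i]
  rw [h2]; ring

lemma Dop_quad (f : ℝ → (Fin m → ℝ) → (Fin m → ℝ) → ℝ)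
    (c : ℝ → (Fin m → ℝ) → ℝ) (bb : ℝ → (Fin m → ℝ) → Fin m → ℝ)
    (aa : ℝ → (Fin m → ℝ) → Fin m → Fin m → ℝ)
    (hsym : ∀ t y k l, aa t y k l = aa t y l k)
    (hf : ∀ t y φ, f t y φ = c t y + (∑ k, bb t y k * φ k) + (1/2) * ∑ k, ∑ l, aa t y k l * φ k * φ l)
    (t : ℝ) (y φ : Fin m → ℝ) :
    Dop f t y φ = (1/2) * (∑ k, ∑ l, aa t y k l * φ k * φ l) - c t y := by
  unfold Dop
  have h1 : ∀ k, φ k * pdPhi f k t y φ = bb t y k * φ k + ∑ l, aa t y k l * φ k * φ l := fun k => by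
    rw [pdPhi_quad f c bb aa hsym hf, mul_add, Finset.mul_sum]
    congr 1
    · ring
    · exact Finset.sum_congr rfl fun l _ => by ring
  rw [Finset.sum_congr rfl fun k _ => h1 k, Finset.sum_add_distrib, hf t y φ]
  ring

lemma sum_rot (f : Fin m → Fin m → Fin m → ℝ) :
    ∑ i, ∑ j, ∑ k, f i j k = ∑ j, ∑ k, ∑ i, f i j k :=
  calc ∑ i, ∑ j, ∑ k, f i j k = ∑ j, ∑ i, ∑ k, f i j k := Finset.sum_comm
    _ = ∑ j, ∑ k, ∑ i, f i j k := Finset.sum_congr rfl fun _ _ => Finset.sum_comm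

lemma sum_swap13 (f : Fin m → Fin m → Fin m → ℝ) :
    ∑ i, ∑ j, ∑ k, f i j k = ∑ k, ∑ j, ∑ i, f i j k :=
  calc ∑ i, ∑ j, ∑ k, f i j k = ∑ j, ∑ i, ∑ k, f i j k := Finset.sum_comm
    _ = ∑ j, ∑ k, ∑ i, f i j k := Finset.sum_congr rfl fun _ _ => Finset.sum_comm
    _ = ∑ k, ∑ j, ∑ i, f i j k := Finset.sum_comm

lemma key_PQ (P φ : Fin m → ℝ) (a : Fin m → Fin m → ℝ)
    (hsym : ∀ k l, a k l = a l k) (hdeg : ∀ i, ∑ j, a i j * P j = 0) :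
    ∑ i, P i * (∑ j, a i j * φ j) = 0 := by
  have h : ∑ i, P i * (∑ j, a i j * φ j) = ∑ j, (∑ i, a j i * P i) * φ j := by
    simp only [Finset.mul_sum, Finset.sum_mul]
    rw [Finset.sum_comm]
    exact Finset.sum_congr rfl fun j _ => Finset.sum_congr rfl fun i _ => by
      rw [hsym j i]; ring
  rw [h]
  simp [hdeg]

lemma key_sums (b φ : Fin m → ℝ) (a M at' : Fin m → Fin m → ℝ)
    (ay : Fin m → Fin m → Fin m → ℝ)
    (hsym : ∀ k l, a k l = a l k)
    (hLie : ∀ k l, at' k l + ∑ i, b i * ay i k l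
      = (∑ r, M k r * a r l) + (∑ r, a k r * M l r)) :
    (1/2) * (∑ k, ∑ l, at' k l * φ k * φ l)
      + ∑ i, ((1/2) * (∑ k, ∑ l, ay i k l * φ k * φ l)) * b i
    = ∑ i, (∑ j, a i j * φ j) * (∑ k, M k i * φ k) := by
  have h1 : ∑ i, ((1/2) * (∑ k, ∑ l, ay i k l * φ k * φ l)) * b i
      = (1/2) * ∑ k, ∑ l, (∑ i, b i * ay i k l) * φ k * φ l := by
    simp only [Finset.sum_mul, Finset.mul_sum, mul_assoc]
    rw [sum_rot]
    exact Finset.sum_congr rfl fun _ _ => Finset.sum_congr rfl fun _ _ =>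
      Finset.sum_congr rfl fun _ _ => by ring
  rw [h1]
  have h2 : (1/2) * (∑ k, ∑ l, at' k l * φ k * φ l)
      + (1/2) * ∑ k, ∑ l, (∑ i, b i * ay i k l) * φ k * φ l
      = (1/2) * ∑ k, ∑ l, ((at' k l + ∑ i, b i * ay i k l) * (φ k * φ l)) := by
    rw [← mul_add, ← Finset.sum_add_distrib]
    congr 1
    refine Finset.sum_congr rfl fun k _ => ?_
    rw [← Finset.sum_add_distrib]
    exact Finset.sum_congr rfl fun l _ => by ring
  rw [h2]
  have h3 : ∀ k l, (at' k l + ∑ i, b i * ay i k l) * (φ k * φ l)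
      = ((∑ r, M k r * a r l) + (∑ r, a k r * M l r)) * (φ k * φ l) := fun k l => by
    rw [hLie k l]
  rw [Finset.sum_congr rfl fun k _ => Finset.sum_congr rfl fun l _ => h3 k l]
  have hswap : ∑ k, ∑ l, (∑ r, a k r * M l r) * (φ k * φ l)
      = ∑ k, ∑ l, (∑ r, M k r * a r l) * (φ k * φ l) := by
    simp only [Finset.sum_mul]
    rw [Finset.sum_comm]
    exact Finset.sum_congr rfl fun k _ => Finset.sum_congr rfl fun l _ =>
      Finset.sum_congr rfl fun r _ => by rw [hsym l r]; ring
  have h4 : (1/2 : ℝ) * ∑ k, ∑ l, ((∑ r, M k r * a r l) + (∑ r, a k r * M l r)) * (φ k * φ l)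
      = ∑ k, ∑ l, (∑ r, M k r * a r l) * (φ k * φ l) := by
    simp only [add_mul, Finset.sum_add_distrib]
    rw [hswap]; ring
  rw [h4]
  symm
  simp only [Finset.sum_mul, Finset.mul_sum]
  rw [sum_rot]
  exact Finset.sum_congr rfl fun _ _ => Finset.sum_congr rfl fun _ _ =>
    Finset.sum_congr rfl fun _ _ => by ring

lemma final_algebra (h0t X : ℝ) (P Q R S b : Fin m → ℝ)
    (hT : h0t + ∑ i, b i * P i = 0)
    (hPQ : ∑ i, P i * Q i = 0)
    (hkey : X + ∑ i, R i * b i = ∑ i, Q i * S i) :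
    (X - h0t) + ∑ i, ((R i - P i) * (b i + Q i) - Q i * (P i + S i + R i)) = 0 := by
  have hexp : ∑ i, ((R i - P i) * (b i + Q i) - Q i * (P i + S i + R i))
      = ∑ i, R i * b i - ∑ i, b i * P i - 2 * ∑ i, P i * Q i - ∑ i, Q i * S i := by
    rw [Finset.mul_sum, ← Finset.sum_sub_distrib, ← Finset.sum_sub_distrib, ← Finset.sum_sub_distrib]
    exact Finset.sum_congr rfl fun i _ => by ring
  rw [hexp]; linarith

/-- exact closure for the N = 2 truncated contact potential
`H = H^(0) + B^iφ_i + (1/2)φᵀAφ`.  Under (i) the zero-order transport equation,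
(ii) the degeneracy condition `A∇H^(0) = 0`, and (iii) the Lie transport equation
`∂_t A + B^l ∂_{y^l} A = MA + AMᵀ`, the master equation
`D[∂H/∂t] + {D[H], H} = 0` holds identically. -/
theorem exact_closure_N2
    (H0 : ℝ → (Fin m → ℝ) → ℝ)
    (B : ℝ → (Fin m → ℝ) → Fin m → ℝ)
    (A : ℝ → (Fin m → ℝ) → Matrix (Fin m) (Fin m) ℝ)
    (hH0 : ContDiff ℝ (⊤ : ℕ∞) fun p : ℝ × (Fin m → ℝ) => H0 p.1 p.2)
    (hB : ContDiff ℝ (⊤ : ℕ∞) fun p : ℝ × (Fin m → ℝ) => B p.1 p.2)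
    (hA : ∀ i j, ContDiff ℝ (⊤ : ℕ∞) fun p : ℝ × (Fin m → ℝ) => A p.1 p.2 i j)
    (hAsymm : ∀ t y, (A t y)ᵀ = A t y)
    (M : ℝ → (Fin m → ℝ) → Matrix (Fin m) (Fin m) ℝ)
    (hM : ∀ t y i j, M t y i j = pd (fun p => B t p i) j y)
    (hTransport : ∀ t y,
      deriv (fun s => H0 s y) t + ∑ i, B t y i * pd (fun p => H0 t p) i y = 0)
    (hDegeneracy : ∀ t y i, ∑ j, A t y i j * pd (fun p => H0 t p) j y = 0)
    (hLie : ∀ t y i j,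
      deriv (fun s => A s y i j) t + ∑ l, B t y l * pd (fun p => A t p i j) l y =
        (M t y * A t y + A t y * (M t y)ᵀ) i j)
    (H : ℝ → (Fin m → ℝ) → (Fin m → ℝ) → ℝ)
    (hH : ∀ t y φ, H t y φ =
      H0 t y + (∑ i, B t y i * φ i) + (1 / 2) * ∑ i, ∑ j, A t y i j * φ i * φ j) :
    ∀ t y φ, Dop (pdT H) t y φ + pb (Dop H) H t y φ = 0 := by
  -- symmetry of A entrywise
  have hsymA : ∀ s z k l, A s z k l = A s z l k := fun s z k l => by
    simpa using congrFun (congrFun (hAsymm s z) l) k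
  -- differentiability
  have hdH0 : Differentiable ℝ (fun p : ℝ × (Fin m → ℝ) => H0 p.1 p.2) :=
    hH0.differentiable (by simp)
  have hdB : ∀ k, Differentiable ℝ (fun p : ℝ × (Fin m → ℝ) => B p.1 p.2 k) := fun k =>
    (ContinuousLinearMap.proj k : (Fin m → ℝ) →L[ℝ] ℝ).differentiable.comp (hB.differentiable (by simp))
  have hdA : ∀ k l, Differentiable ℝ (fun p : ℝ × (Fin m → ℝ) => A p.1 p.2 k l) := fun k l =>
    (hA k l).differentiable (by simp)
  have curryY : ∀ (f : ℝ × (Fin m → ℝ) → ℝ), Differentiable ℝ f →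
      ∀ s, Differentiable ℝ (fun p : Fin m → ℝ => f (s, p)) := fun f hf s =>
    hf.comp ((differentiable_const s).prodMk differentiable_id)
  have curryT : ∀ (f : ℝ × (Fin m → ℝ) → ℝ), Differentiable ℝ f →
      ∀ z, Differentiable ℝ (fun s : ℝ => f (s, z)) := fun f hf z =>
    hf.comp (differentiable_id.prodMk (differentiable_const z))
  -- pdT formula
  have hpdT : ∀ t y φ, pdT H t y φ = deriv (fun s => H0 s y) t
      + (∑ k, deriv (fun s => B s y k) t * φ k)
      + (1/2) * ∑ k, ∑ l, deriv (fun s => A s y k l) t * φ k * φ l := by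
    intro t y φ
    unfold pdT
    rw [show (fun s => H s y φ) = (fun s => H0 s y + (∑ k, B s y k * φ k)
      + (1/2) * ∑ k, ∑ l, A s y k l * φ k * φ l) from funext fun s => hH s y φ]
    have d0 : DifferentiableAt ℝ (fun s => H0 s y) t := (curryT _ hdH0 y) t
    have dB : ∀ k, DifferentiableAt ℝ (fun s => B s y k) t := fun k => (curryT _ (hdB k) y) t
    have dA : ∀ k l, DifferentiableAt ℝ (fun s => A s y k l) t := fun k l => (curryT _ (hdA k l) y) t
    exact (((d0.hasDerivAt).add (HasDerivAt.fun_sum fun k _ => (dB k).hasDerivAt.mul_const (φ k))).add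
      (HasDerivAt.const_mul (1/2 : ℝ) (HasDerivAt.fun_sum fun k _ => HasDerivAt.fun_sum fun l _ =>
        ((dA k l).hasDerivAt.mul_const (φ k)).mul_const (φ l)))).deriv
  -- symmetry of the t-derivative matrix
  have hsymAt : ∀ t y k l, deriv (fun s => A s y k l) t = deriv (fun s => A s y l k) t :=
    fun t y k l => by rw [show (fun s => A s y k l) = fun s => A s y l k from
      funext fun s => hsymA s y k l]
  -- Dop H formula
  have hDopH : ∀ t y φ, Dop H t y φ = (1/2) * (∑ k, ∑ l, A t y k l * φ k * φ l) - H0 t y :=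
    Dop_quad H H0 B (fun t y => A t y) (fun t y k l => hsymA t y k l)
      hH
  -- Dop (pdT H) formula
  have hDopT : ∀ t y φ, Dop (pdT H) t y φ
      = (1/2) * (∑ k, ∑ l, deriv (fun s => A s y k l) t * φ k * φ l)
        - deriv (fun s => H0 s y) t :=
    Dop_quad (pdT H) (fun t y => deriv (fun s => H0 s y) t)
      (fun t y k => deriv (fun s => B s y k) t)
      (fun t y k l => deriv (fun s => A s y k l) t)
      (fun t y k l => hsymAt t y k l) hpdT
  intro t y φ
  -- pdPhi formulas
  have hpdPhiH : ∀ k, pdPhi H k t y φ = B t y k + ∑ j, A t y k j * φ j := fun k =>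
    pdPhi_quad H H0 B (fun t y => A t y) (fun t y k l => hsymA t y k l)
      hH k t y φ
  have hG : ∀ t y φ, Dop H t y φ = (-(H0 t y)) + (∑ k, (0:ℝ) * φ k)
      + (1/2) * ∑ k, ∑ l, A t y k l * φ k * φ l := by
    intro t y φ
    rw [hDopH t y φ]
    have hz : ∑ k, (0:ℝ) * φ k = 0 := by simp
    rw [hz]; ring
  have hpdPhiDop : ∀ i, pdPhi (Dop H) i t y φ = ∑ j, A t y i j * φ j := fun i => by
    have h := pdPhi_quad (Dop H) (fun t y => -(H0 t y)) (fun _ _ _ => (0:ℝ))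
      (fun t y => A t y) (fun t y k l => hsymA t y k l) hG i t y φ
    simpa using h
  -- pdY formula for H
  have hpdYH : ∀ i, pdY H i t y φ = pd (fun p => H0 t p) i y
      + (∑ k, pd (fun p => B t p k) i y * φ k)
      + (1/2) * ∑ k, ∑ l, pd (fun p => A t p k l) i y * φ k * φ l := by
    intro i
    unfold pdY
    rw [show (fun p => H t p φ) = (fun p => H0 t p + (∑ k, B t p k * φ k)
      + (1/2) * ∑ k, ∑ l, A t p k l * φ k * φ l) from funext fun p => hH t p φ]
    have d0 : DifferentiableAt ℝ (fun p => H0 t p) y := (curryY _ hdH0 t) y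
    have dB : ∀ k, DifferentiableAt ℝ (fun p => B t p k) y := fun k => (curryY _ (hdB k) t) y
    have dA : ∀ k l, DifferentiableAt ℝ (fun p => A t p k l) y := fun k l => (curryY _ (hdA k l) t) y
    have h : HasFDerivAt (fun p => H0 t p + (∑ k, B t p k * φ k)
        + (1/2) * ∑ k, ∑ l, A t p k l * φ k * φ l)
        ((fderiv ℝ (fun p => H0 t p) y + ∑ k, φ k • fderiv ℝ (fun p => B t p k) y)
          + (1/2 : ℝ) • ∑ k, ∑ l, φ l • φ k • fderiv ℝ (fun p => A t p k l) y) y :=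
      (((d0.hasFDerivAt).add (HasFDerivAt.fun_sum fun k _ =>
          (dB k).hasFDerivAt.mul_const (φ k))).add
        (HasFDerivAt.const_mul (HasFDerivAt.fun_sum fun k _ => HasFDerivAt.fun_sum fun l _ =>
          ((dA k l).hasFDerivAt.mul_const (φ k)).mul_const (φ l)) (1/2 : ℝ)))
    rw [h.fderiv]
    simp only [ContinuousLinearMap.add_apply, ContinuousLinearMap.coe_sum',
      Finset.sum_apply, ContinuousLinearMap.coe_smul', Pi.smul_apply, smul_eq_mul, pd]
    congr 1
    · congr 1
      exact Finset.sum_congr rfl fun k _ => by ring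
    · congr 1
      exact Finset.sum_congr rfl fun k _ => Finset.sum_congr rfl fun l _ => by ring
  -- pdY formula for Dop H
  have hpdYDop : ∀ i, pdY (Dop H) i t y φ
      = (1/2) * (∑ k, ∑ l, pd (fun p => A t p k l) i y * φ k * φ l)
        - pd (fun p => H0 t p) i y := by
    intro i
    unfold pdY
    rw [show (fun p => Dop H t p φ) = (fun p => (1/2) * (∑ k, ∑ l, A t p k l * φ k * φ l)
      - H0 t p) from funext fun p => hDopH t p φ]
    have d0 : DifferentiableAt ℝ (fun p => H0 t p) y := (curryY _ hdH0 t) y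
    have dA : ∀ k l, DifferentiableAt ℝ (fun p => A t p k l) y := fun k l => (curryY _ (hdA k l) t) y
    have h : HasFDerivAt (fun p => (1/2) * (∑ k, ∑ l, A t p k l * φ k * φ l) - H0 t p)
        ((1/2 : ℝ) • (∑ k, ∑ l, φ l • φ k • fderiv ℝ (fun p => A t p k l) y)
          - fderiv ℝ (fun p => H0 t p) y) y :=
      (HasFDerivAt.const_mul (HasFDerivAt.fun_sum fun k _ => HasFDerivAt.fun_sum fun l _ =>
        ((dA k l).hasFDerivAt.mul_const (φ k)).mul_const (φ l)) (1/2 : ℝ)).sub d0.hasFDerivAt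
    rw [h.fderiv]
    simp only [ContinuousLinearMap.sub_apply, ContinuousLinearMap.coe_sum',
      Finset.sum_apply, ContinuousLinearMap.coe_smul', Pi.smul_apply, smul_eq_mul, pd]
    congr 1
    congr 1
    exact Finset.sum_congr rfl fun k _ => Finset.sum_congr rfl fun l _ => by ring
  -- assemble pb
  have hpb : pb (Dop H) H t y φ = ∑ i,
      (((1/2) * (∑ k, ∑ l, pd (fun p => A t p k l) i y * φ k * φ l) - pd (fun p => H0 t p) i y)
          * (B t y i + ∑ j, A t y i j * φ j)
        - (∑ j, A t y i j * φ j) * (pd (fun p => H0 t p) i y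
          + (∑ k, pd (fun p => B t p k) i y * φ k)
          + (1/2) * ∑ k, ∑ l, pd (fun p => A t p k l) i y * φ k * φ l)) := by
    unfold pb
    exact Finset.sum_congr rfl fun i _ => by
      rw [hpdYDop i, hpdPhiDop i, hpdPhiH i, hpdYH i]
  rw [hDopT t y φ, hpb]
  -- final algebra
  have hLie' : ∀ k l, deriv (fun s => A s y k l) t
      + ∑ i, B t y i * pd (fun p => A t p k l) i y
      = (∑ r, pd (fun p => B t p k) r y * A t y r l)
        + (∑ r, A t y k r * pd (fun p => B t p l) r y) := by
    intro k l
    have h := hLie t y k l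
    rw [h]
    simp [Matrix.add_apply, Matrix.mul_apply, Matrix.transpose_apply, hM]
  have hkey := key_sums (fun i => B t y i) φ (fun k l => A t y k l)
    (fun k i => pd (fun p => B t p k) i y)
    (fun k l => deriv (fun s => A s y k l) t)
    (fun i k l => pd (fun p => A t p k l) i y)
    (fun k l => hsymA t y k l) hLie'
  have hPQ := key_PQ (fun i => pd (fun p => H0 t p) i y) φ (fun k l => A t y k l)
    (fun k l => hsymA t y k l) (hDegeneracy t y)
  exact final_algebra (deriv (fun s => H0 s y) t)
    ((1/2) * (∑ k, ∑ l, deriv (fun s => A s y k l) t * φ k * φ l))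
    (fun i => pd (fun p => H0 t p) i y)
    (fun i => ∑ j, A t y i j * φ j)
    (fun i => (1/2) * (∑ k, ∑ l, pd (fun p => A t p k l) i y * φ k * φ l))
    (fun i => ∑ k, pd (fun p => B t p k) i y * φ k)
    (fun i => B t y i)
    (hTransport t y) hPQ hkey


end Stmt7
end

section
/- Let A(t), v(t) be differentiable with A(t) symmetric, satisfying Ȧ = M̃A + AM̃^T + Δ[A] where M̃ = PMP, Δ[A] = AM^T(I−P) + (I−P)MA, P = I − vv^T/|v|², and v̇ = −M^T v with v(t) ≠ 0 for all t. If A(0)v(0) = 0 then A(t)v(t) = 0 for all t. -/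
/-!
Write `w = A v`. Since `P` is the symmetric projector with `P v = 0`, differentiating gives
`ẇ = (PMP)w + (I − P)Mw`: the term `A(PMP)ᵀv` vanishes and `AMᵀ(I − P)v = AMᵀv` cancels against
`A v̇ = −AMᵀv`. So `w` solves a linear ODE with continuous coefficients and `w(0) = 0`, and
uniqueness of solutions of such ODEs forces `w ≡ 0`.
-/

open Matrix Set

theorem linear_ODE_solution_eq_zero {E : Type*} [NormedAddCommGroup E] [NormedSpace ℝ E]
    {L : ℝ → E →L[ℝ] E} (hL : Continuous L) {f : ℝ → E}
    (hf : ∀ t, HasDerivAt f (L t (f t)) t) {t₀ : ℝ} (h₀ : f t₀ = 0) (t : ℝ) : f t = 0 := by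
  obtain ⟨r, hr, htr⟩ : ∃ r > 0, |t - t₀| < r := ⟨|t - t₀| + 1, by positivity, by linarith⟩
  obtain ⟨K, hK⟩ := (isCompact_Icc (a := t₀ - r) (b := t₀ + r)).exists_bound_of_continuousOn
    hL.continuousOn
  have hLip (s) (hs : s ∈ Ioo (t₀ - r) (t₀ + r)) : LipschitzOnWith K.toNNReal (L s) univ := by
    refine ((L s).lipschitz.weaken ?_).lipschitzOnWith
    rw [← NNReal.coe_le_coe, coe_nnnorm, Real.coe_toNNReal']
    exact (hK s (Ioo_subset_Icc_self hs)).trans (le_max_left _ _)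
  have hzero (s : ℝ) : HasDerivAt (0 : ℝ → E) (L s 0) s := by
    rw [map_zero]; exact hasDerivAt_const s 0
  rw [abs_sub_lt_iff] at htr
  exact ODE_solution_unique_of_mem_Ioo hLip (t₀ := t₀) (by constructor <;> linarith)
    (fun s _ => ⟨hf s, trivial⟩) (fun s _ => ⟨hzero s, trivial⟩) h₀
    (by constructor <;> linarith)

theorem matrix_linear_ODE_solution_eq_zero {n : Type*} [Fintype n]
    {B : ℝ → Matrix n n ℝ} (hB : Continuous B) {f : ℝ → n → ℝ}
    (hf : ∀ t, HasDerivAt f (B t *ᵥ f t) t) {t₀ : ℝ} (h₀ : f t₀ = 0) (t : ℝ) : f t = 0 := by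
  let toCLM : Matrix n n ℝ →ₗ[ℝ] (n → ℝ) →L[ℝ] (n → ℝ) :=
    LinearMap.toContinuousLinearMap.toLinearMap ∘ₗ mulVecBilin ℝ ℝ
  exact linear_ODE_solution_eq_zero (L := fun t => toCLM (B t))
    (toCLM.continuous_of_finiteDimensional.comp hB) hf h₀ t

theorem hasDerivAt_mulVec {𝕜 : Type*} [NontriviallyNormedField 𝕜] {m n : Type*} [Fintype n]
    {A : 𝕜 → Matrix m n 𝕜} {A' : Matrix m n 𝕜} {v : 𝕜 → n → 𝕜} {v' : n → 𝕜} {t : 𝕜}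
    (hA : ∀ i j, HasDerivAt (fun s => A s i j) (A' i j) t)
    (hv : ∀ j, HasDerivAt (fun s => v s j) (v' j) t) :
    HasDerivAt (fun s => A s *ᵥ v s) (A' *ᵥ v t + A t *ᵥ v') t := by
  refine hasDerivAt_pi.2 fun i => ?_
  simpa only [mulVec, dotProduct, Pi.add_apply, ← Finset.sum_add_distrib] using
    HasDerivAt.fun_sum fun j _ => (hA i j).fun_mul (hv j)

section ProjOrthCompl

variable {n R : Type*} [Fintype n]

def projOrthCompl [Field R] [DecidableEq n] (v : n → R) : Matrix n n R :=
  1 - (v ⬝ᵥ v)⁻¹ • vecMulVec v v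

theorem projOrthCompl_mulVec_self [Field R] [DecidableEq n] {v : n → R} (hv : v ⬝ᵥ v ≠ 0) :
    projOrthCompl v *ᵥ v = 0 := by
  rw [projOrthCompl, sub_mulVec, one_mulVec, smul_mulVec, vecMulVec_mulVec, op_smul_eq_smul,
    smul_smul, inv_mul_cancel₀ hv, one_smul, sub_self]

theorem transpose_projOrthCompl [Field R] [DecidableEq n] (v : n → R) :
    (projOrthCompl v)ᵀ = projOrthCompl v := by
  rw [projOrthCompl, transpose_sub, transpose_one, transpose_smul, transpose_vecMulVec]

theorem Continuous.projOrthCompl [DecidableEq n] {X : Type*} [TopologicalSpace X]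
    {v : X → n → ℝ} (hv : Continuous v) (hv₀ : ∀ x, v x ≠ 0) :
    Continuous fun x => projOrthCompl (v x) :=
  continuous_const.sub <|
    ((hv.dotProduct hv).inv₀ fun x => (hv₀ x <| dotProduct_self_eq_zero.1 ·)).smul
      (hv.matrix_vecMulVec hv)

end ProjOrthCompl

theorem projectedLyapunov_mulVec_add {n R : Type*} [Fintype n] [DecidableEq n] [CommRing R]
    {P : Matrix n n R} (M A : Matrix n n R) {v : n → R} (hPT : Pᵀ = P) (hPv : P *ᵥ v = 0) :
    (P * M * P * A + A * (P * M * P)ᵀ + A * Mᵀ * (1 - P) + (1 - P) * M * A) *ᵥ v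
        + A *ᵥ (-(Mᵀ *ᵥ v)) = (P * M * P + (1 - P) * M) *ᵥ (A *ᵥ v) := by
  simp only [add_mulVec, sub_mulVec, one_mulVec, transpose_mul, hPT, ← mulVec_mulVec, hPv,
    mulVec_zero, mulVec_neg, sub_zero]
  abel

theorem projected_lyapunov_preserves_degeneracy_general {m : ℕ}
    (M : ℝ → Matrix (Fin m) (Fin m) ℝ)
    (hM : ∀ i j, Continuous fun t => M t i j)
    (v : ℝ → Fin m → ℝ)
    (hvne : ∀ t, v t ≠ 0)
    (hv : ∀ t i, HasDerivAt (fun s => v s i) (-((M t)ᵀ *ᵥ v t) i) t)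
    (P : ℝ → Matrix (Fin m) (Fin m) ℝ)
    (hP : ∀ t, P t = 1 - (v t ⬝ᵥ v t)⁻¹ • vecMulVec (v t) (v t))
    (A : ℝ → Matrix (Fin m) (Fin m) ℝ)
    (hA : ∀ t i j, HasDerivAt (fun s => A s i j)
      (((P t * M t * P t) * A t + A t * (P t * M t * P t)ᵀ +
        A t * (M t)ᵀ * (1 - P t) + (1 - P t) * M t * A t) i j) t)
    (hinit : A 0 *ᵥ v 0 = 0) :
    ∀ t, A t *ᵥ v t = 0 := by
  have hP' (t : ℝ) : P t = projOrthCompl (v t) := hP t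
  have hvc : Continuous v :=
    continuous_pi fun i => continuous_iff_continuousAt.2 fun t => (hv t i).continuousAt
  have hPc : Continuous P := funext hP' ▸ hvc.projOrthCompl hvne
  have hMc : Continuous M := continuous_matrix hM
  have hw (t : ℝ) : HasDerivAt (fun s => A s *ᵥ v s)
      ((P t * M t * P t + (1 - P t) * M t) *ᵥ (A t *ᵥ v t)) t := by
    have hPT : (P t)ᵀ = P t := by rw [hP', transpose_projOrthCompl]
    have hPv : P t *ᵥ v t = 0 := by
      rw [hP', projOrthCompl_mulVec_self (hvne t <| dotProduct_self_eq_zero.1 ·)]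
    rw [← projectedLyapunov_mulVec_add _ _ hPT hPv]
    exact hasDerivAt_mulVec (hA t) (hv t)
  exact matrix_linear_ODE_solution_eq_zero
    (((hPc.matrix_mul hMc).matrix_mul hPc).add ((continuous_const.sub hPc).matrix_mul hMc))
    hw hinit

/-- degeneracy preservation under the projected Lyapunov
equation `Ȧ = (PMP)A + A(PMP)ᵀ + AMᵀ(I−P) + (I−P)MA`, where
`P(t) = I − v(t)v(t)ᵀ/|v(t)|²` and `v̇ = −Mᵀv` with `v(t) ≠ 0`:
if `A(0)v(0) = 0` then `A(t)v(t) = 0` for all `t`. -/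
theorem projected_lyapunov_preserves_degeneracy {m : ℕ}
    (M : ℝ → Matrix (Fin m) (Fin m) ℝ)
    (hM : ∀ i j, Continuous fun t => M t i j)
    (v : ℝ → Fin m → ℝ)
    (hvne : ∀ t, v t ≠ 0)
    (hv : ∀ t i, HasDerivAt (fun s => v s i) (-((M t)ᵀ *ᵥ v t) i) t)
    (P : ℝ → Matrix (Fin m) (Fin m) ℝ)
    (hP : ∀ t, P t = 1 - (v t ⬝ᵥ v t)⁻¹ • vecMulVec (v t) (v t))
    (A : ℝ → Matrix (Fin m) (Fin m) ℝ)
    (hAsymm : ∀ t, (A t)ᵀ = A t)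
    (hA : ∀ t i j, HasDerivAt (fun s => A s i j)
      (((P t * M t * P t) * A t + A t * (P t * M t * P t)ᵀ +
        A t * (M t)ᵀ * (1 - P t) + (1 - P t) * M t * A t) i j) t)
    (hinit : A 0 *ᵥ v 0 = 0) :
    ∀ t, A t *ᵥ v t = 0 :=
  projected_lyapunov_preserves_degeneracy_general M hM v hvne hv P hP A hA hinit
end
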